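/- Consider the 2D lattice Kuramoto model with coupling range r = √2 (adjacency exactly when the toroidal squared distance is 1 or 2, i.e., nearest plus diagonal neighbors) and the (q1,q2)-twisted state. If 4(|q1| + |q2|) < L, then the Jacobian matrix J at the twisted state is negative semidefinite and its kernel is one-dimensional, spanned by the all-ones vector; hence all eigenvalues of J other than the simple eigenvalue 0 are strictly negative (the twisted state is asymptotically stable). -/
import Mathlib

noncomputable section
open Real Finset Matrix

/-- Toroidal squared distance on the 2D lattice `(ZMod L)²`. -/
def torDist2 (L : ℕ) (x y : ZMod L × ZMod L) : ℕ :=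
  (min ((x.1.val : ℤ) - (y.1.val : ℤ)).natAbs
      (L - ((x.1.val : ℤ) - (y.1.val : ℤ)).natAbs)) ^ 2
  + (min ((x.2.val : ℤ) - (y.2.val : ℤ)).natAbs
      (L - ((x.2.val : ℤ) - (y.2.val : ℤ)).natAbs)) ^ 2

/-- Adjacency with (integer) squared coupling range `r2`:
`A(x,y) = 1` iff `0 < d(x,y) ≤ r2`, else `0`. -/
def adjN2 (L r2 : ℕ) (x y : ZMod L × ZMod L) : ℝ :=
  if 0 < torDist2 L x y ∧ torDist2 L x y ≤ r2 then 1 else 0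

/-- The `(q1,q2)`-twisted state `θ_{i,j} = 2π q1 i / L + 2π q2 j / L + C`. -/
def twisted2 (L : ℕ) (q1 q2 : ℤ) (C : ℝ) (x : ZMod L × ZMod L) : ℝ :=
  2 * π * q1 * x.1.val / L + 2 * π * q2 * x.2.val / L + C

/-- The Jacobian of the 2D lattice Kuramoto model (squared range `r2`) at a configuration `u`. -/
def jac2 (L : ℕ) [NeZero L] (r2 : ℕ) (u : ZMod L × ZMod L → ℝ) :
    Matrix (ZMod L × ZMod L) (ZMod L × ZMod L) ℝ :=
  fun x y =>
    if x = y then -∑ z, adjN2 L r2 x z * Real.cos (u z - u x)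
    else adjN2 L r2 x y * Real.cos (u y - u x)

/-- Edge weight. -/
def wgt (L r2 : ℕ) (u : ZMod L × ZMod L → ℝ) (x y : ZMod L × ZMod L) : ℝ :=
  adjN2 L r2 x y * Real.cos (u y - u x)

lemma torDist2_comm (L : ℕ) (x y : ZMod L × ZMod L) : torDist2 L x y = torDist2 L y x := by
  unfold torDist2
  rw [show ((x.1.val : ℤ) - y.1.val).natAbs = ((y.1.val : ℤ) - x.1.val).natAbs by omega,
      show ((x.2.val : ℤ) - y.2.val).natAbs = ((y.2.val : ℤ) - x.2.val).natAbs by omega]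

lemma torDist2_self (L : ℕ) (x : ZMod L × ZMod L) : torDist2 L x x = 0 := by
  simp [torDist2]

lemma wgt_comm (L r2 : ℕ) (u : ZMod L × ZMod L → ℝ) (x y : ZMod L × ZMod L) :
    wgt L r2 u x y = wgt L r2 u y x := by
  unfold wgt adjN2
  rw [torDist2_comm, ← Real.cos_neg (u y - u x), neg_sub]

lemma wgt_self (L r2 : ℕ) (u : ZMod L × ZMod L → ℝ) (x : ZMod L × ZMod L) :
    wgt L r2 u x x = 0 := by
  simp [wgt, adjN2, torDist2_self]

lemma rowsum (L : ℕ) [NeZero L] (r2 : ℕ) (u v : ZMod L × ZMod L → ℝ) (x : ZMod L × ZMod L) :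
    ∑ y, jac2 L r2 u x y * v y = ∑ y, wgt L r2 u x y * (v y - v x) := by
  have key : ∀ y, jac2 L r2 u x y * v y
      = wgt L r2 u x y * v y - (if x = y then ∑ z, wgt L r2 u x z else 0) * v y := by
    intro y
    by_cases hxy : x = y
    · subst hxy
      simp [jac2, wgt, adjN2, torDist2_self]
    · simp [jac2, wgt, hxy]
  calc ∑ y, jac2 L r2 u x y * v y
      = ∑ y, (wgt L r2 u x y * v y - (if x = y then ∑ z, wgt L r2 u x z else 0) * v y) :=
        Finset.sum_congr rfl (fun y _ => key y)
    _ = ∑ y, wgt L r2 u x y * v y - ∑ y, (if x = y then ∑ z, wgt L r2 u x z else 0) * v y := by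
        rw [Finset.sum_sub_distrib]
    _ = ∑ y, wgt L r2 u x y * v y - ∑ y, wgt L r2 u x y * v x := by
        congr 1
        calc ∑ y, (if x = y then ∑ z, wgt L r2 u x z else 0) * v y
            = ∑ y, (if x = y then (∑ z, wgt L r2 u x z) * v y else 0) :=
              Finset.sum_congr rfl (fun y _ => by split <;> simp)
          _ = (∑ z, wgt L r2 u x z) * v x := by simp
          _ = ∑ y, wgt L r2 u x y * v x := by rw [Finset.sum_mul]
    _ = ∑ y, wgt L r2 u x y * (v y - v x) := by
        rw [← Finset.sum_sub_distrib]
        exact Finset.sum_congr rfl (fun y _ => by ring)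

lemma quad (L : ℕ) [NeZero L] (r2 : ℕ) (u v : ZMod L × ZMod L → ℝ) :
    v ⬝ᵥ (jac2 L r2 u).mulVec v
      = -(1/2) * ∑ x, ∑ y, wgt L r2 u x y * (v x - v y)^2 := by
  have hS : v ⬝ᵥ (jac2 L r2 u).mulVec v
      = ∑ x, ∑ y, v x * (wgt L r2 u x y * (v y - v x)) := by
    simp only [dotProduct, Matrix.mulVec, Finset.mul_sum]
    exact Finset.sum_congr rfl (fun x _ => by rw [← Finset.mul_sum, ← Finset.mul_sum, rowsum L r2 u v x])
  rw [hS]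
  have h2 : ∑ x, ∑ y, v x * (wgt L r2 u x y * (v y - v x))
      = ∑ x, ∑ y, v y * (wgt L r2 u x y * (v x - v y)) := by
    rw [Finset.sum_comm]
    exact Finset.sum_congr rfl (fun x _ => Finset.sum_congr rfl (fun y _ => by rw [wgt_comm]))
  have h3 : (∑ x, ∑ y, v x * (wgt L r2 u x y * (v y - v x)))
      + (∑ x, ∑ y, v x * (wgt L r2 u x y * (v y - v x)))
      = ∑ x, ∑ y, (- (wgt L r2 u x y * (v x - v y)^2)) := by
    nth_rewrite 2 [h2]
    rw [← Finset.sum_add_distrib]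
    refine Finset.sum_congr rfl (fun x _ => ?_)
    rw [← Finset.sum_add_distrib]
    exact Finset.sum_congr rfl (fun y _ => by ring)
  have h4 : ∑ x, ∑ y, -(wgt L r2 u x y * (v x - v y)^2)
      = -∑ x, ∑ y, wgt L r2 u x y * (v x - v y)^2 := by simp
  rw [h4] at h3
  linarith

lemma exists_small (L : ℕ) (a : ℤ) (hlt : a.natAbs < L)
    (hm : min a.natAbs (L - a.natAbs) ≤ 1) :
    ∃ a' k : ℤ, a'.natAbs ≤ 1 ∧ a = a' + k * L := by
  by_cases h1 : a.natAbs ≤ 1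
  · exact ⟨a, 0, h1, by ring⟩
  · rcases le_or_gt 0 a with hpos | hneg
    · exact ⟨a - L, 1, by omega, by ring⟩
    · exact ⟨a + L, -1, by omega, by ring⟩

lemma cos_pos_adj (L : ℕ) [NeZero L] (q1 q2 : ℤ) (C : ℝ) (h : 4 * (|q1| + |q2|) < (L : ℤ))
    (x y : ZMod L × ZMod L) (h1 : 0 < torDist2 L x y) (h2 : torDist2 L x y ≤ 2) :
    0 < Real.cos (twisted2 L q1 q2 C y - twisted2 L q1 q2 C x) := by
  have hL : 0 < L := Nat.pos_of_ne_zero (NeZero.ne L)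
  have hLR : (0:ℝ) < L := Nat.cast_pos.mpr hL
  set a : ℤ := (y.1.val : ℤ) - x.1.val with ha
  set b : ℤ := (y.2.val : ℤ) - x.2.val with hb
  have hva : a.natAbs < L := by
    have := ZMod.val_lt x.1; have := ZMod.val_lt y.1; omega
  have hvb : b.natAbs < L := by
    have := ZMod.val_lt x.2; have := ZMod.val_lt y.2; omega
  have hd2 : (min ((x.1.val : ℤ) - y.1.val).natAbs (L - ((x.1.val : ℤ) - y.1.val).natAbs)) ^ 2
      + (min ((x.2.val : ℤ) - y.2.val).natAbs (L - ((x.2.val : ℤ) - y.2.val).natAbs)) ^ 2 ≤ 2 := h2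
  have hna : ((x.1.val : ℤ) - y.1.val).natAbs = a.natAbs := by omega
  have hnb : ((x.2.val : ℤ) - y.2.val).natAbs = b.natAbs := by omega
  rw [hna, hnb] at hd2
  have hma : min a.natAbs (L - a.natAbs) ≤ 1 := by
    by_contra hc
    push_neg at hc
    have : 2^2 ≤ (min a.natAbs (L - a.natAbs))^2 := Nat.pow_le_pow_left hc 2
    omega
  have hmb : min b.natAbs (L - b.natAbs) ≤ 1 := by
    by_contra hc
    push_neg at hc
    have : 2^2 ≤ (min b.natAbs (L - b.natAbs))^2 := Nat.pow_le_pow_left hc 2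
    omega
  obtain ⟨a', k1, ha1, hk1⟩ := exists_small L a hva hma
  obtain ⟨b', k2, hb1, hk2⟩ := exists_small L b hvb hmb
  have harr : (y.1.val : ℝ) = (x.1.val : ℝ) + ((a' : ℝ) + (k1 : ℝ) * L) := by
    have h' : ((a : ℤ) : ℝ) = (a' : ℝ) + (k1 : ℝ) * (L : ℝ) := by exact_mod_cast hk1
    rw [ha] at h'
    push_cast at h'
    linarith
  have hbrr : (y.2.val : ℝ) = (x.2.val : ℝ) + ((b' : ℝ) + (k2 : ℝ) * L) := by
    have h' : ((b : ℤ) : ℝ) = (b' : ℝ) + (k2 : ℝ) * (L : ℝ) := by exact_mod_cast hk2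
    rw [hb] at h'
    push_cast at h'
    linarith
  have hcos : twisted2 L q1 q2 C y - twisted2 L q1 q2 C x
      = 2*π*((q1:ℝ)*a' + (q2:ℝ)*b')/L + ((q1*k1 + q2*k2 : ℤ):ℝ) * (2*π) := by
    unfold twisted2
    rw [harr, hbrr]
    push_cast
    field_simp
    ring
  rw [hcos, Real.cos_add_int_mul_two_pi]
  -- bound on the sum
  have hs : (q1*a' + q2*b').natAbs ≤ q1.natAbs + q2.natAbs := by
    have h3 := Int.natAbs_add_le (q1*a') (q2*b')
    rw [Int.natAbs_mul, Int.natAbs_mul] at h3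
    have h4 : q1.natAbs * a'.natAbs ≤ q1.natAbs * 1 := Nat.mul_le_mul_left _ ha1
    have h5 : q2.natAbs * b'.natAbs ≤ q2.natAbs * 1 := Nat.mul_le_mul_left _ hb1
    omega
  have habs : 4 * ((q1*a' + q2*b').natAbs : ℤ) < L := by
    rw [Int.abs_eq_natAbs, Int.abs_eq_natAbs] at h
    omega
  set S : ℝ := (q1:ℝ)*a' + (q2:ℝ)*b' with hSdef
  have hS4 : |S| * 4 < (L:ℝ) := by
    have : (((q1*a' + q2*b').natAbs : ℤ) : ℝ) * 4 < (L:ℝ) := by exact_mod_cast (by omega : ((q1*a' + q2*b').natAbs : ℤ) * 4 < (L:ℤ))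
    rw [Nat.cast_natAbs] at this
    push_cast at this
    rw [hSdef]
    convert this using 3
  have hSlt : S < L/4 := by
    have := abs_lt.mp (show |S| < L/4 by linarith)
    linarith [this.2]
  have hSgt : -(L/4) < S := by
    have := abs_lt.mp (show |S| < L/4 by linarith)
    linarith [this.1]
  apply Real.cos_pos_of_mem_Ioo
  constructor
  · rw [lt_div_iff₀ hLR]
    have := mul_lt_mul_of_pos_left hSgt Real.pi_pos
    nlinarith [Real.pi_pos]
  · rw [div_lt_iff₀ hLR]
    have := mul_lt_mul_of_pos_left hSlt Real.pi_pos
    nlinarith [Real.pi_pos]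

lemma torDist2_step1 (L : ℕ) [NeZero L] (hL : 2 ≤ L) (i j : ZMod L) :
    torDist2 L (i, j) (i + 1, j) = 1 := by
  have hi := ZMod.val_lt i
  have h1 : (1 : ZMod L).val = 1 := by
    rw [ZMod.val_one_eq_one_mod]; exact Nat.mod_eq_of_lt (by omega)
  have hv : (i + (1:ZMod L)).val = i.val + 1 ∨ (i.val + 1 = L ∧ (i + (1:ZMod L)).val = 0) := by
    have h0 := ZMod.val_add i 1
    rw [h1] at h0
    rcases Nat.lt_or_ge (i.val + 1) L with hlt | hge
    · left; rw [h0, Nat.mod_eq_of_lt hlt]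
    · right
      have hiv : i.val + 1 = L := by omega
      exact ⟨hiv, by rw [h0, hiv, Nat.mod_self]⟩
  show (min ((i.val : ℤ) - ((i+1 : ZMod L).val : ℤ)).natAbs
      (L - ((i.val : ℤ) - ((i+1 : ZMod L).val : ℤ)).natAbs))^2
    + (min ((j.val : ℤ) - (j.val : ℤ)).natAbs (L - ((j.val : ℤ) - (j.val : ℤ)).natAbs))^2 = 1
  have e1 : min ((i.val : ℤ) - ((i+1 : ZMod L).val : ℤ)).natAbs
      (L - ((i.val : ℤ) - ((i+1 : ZMod L).val : ℤ)).natAbs) = 1 := by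
    rcases hv with hv | hv <;> omega
  have e2 : min ((j.val : ℤ) - (j.val : ℤ)).natAbs
      (L - ((j.val : ℤ) - (j.val : ℤ)).natAbs) = 0 := by omega
  rw [e1, e2]; norm_num

lemma torDist2_step2 (L : ℕ) [NeZero L] (hL : 2 ≤ L) (i j : ZMod L) :
    torDist2 L (i, j) (i, j + 1) = 1 := by
  have hj := ZMod.val_lt j
  have h1 : (1 : ZMod L).val = 1 := by
    rw [ZMod.val_one_eq_one_mod]; exact Nat.mod_eq_of_lt (by omega)
  have hv : (j + (1:ZMod L)).val = j.val + 1 ∨ (j.val + 1 = L ∧ (j + (1:ZMod L)).val = 0) := by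
    have h0 := ZMod.val_add j 1
    rw [h1] at h0
    rcases Nat.lt_or_ge (j.val + 1) L with hlt | hge
    · left; rw [h0, Nat.mod_eq_of_lt hlt]
    · right
      have hjv : j.val + 1 = L := by omega
      exact ⟨hjv, by rw [h0, hjv, Nat.mod_self]⟩
  show (min ((i.val : ℤ) - (i.val : ℤ)).natAbs (L - ((i.val : ℤ) - (i.val : ℤ)).natAbs))^2
    + (min ((j.val : ℤ) - ((j+1 : ZMod L).val : ℤ)).natAbs
      (L - ((j.val : ℤ) - ((j+1 : ZMod L).val : ℤ)).natAbs))^2 = 1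
  have e1 : min ((i.val : ℤ) - (i.val : ℤ)).natAbs
      (L - ((i.val : ℤ) - (i.val : ℤ)).natAbs) = 0 := by omega
  have e2 : min ((j.val : ℤ) - ((j+1 : ZMod L).val : ℤ)).natAbs
      (L - ((j.val : ℤ) - ((j+1 : ZMod L).val : ℤ)).natAbs) = 1 := by
    rcases hv with hv | hv <;> omega
  rw [e1, e2]; norm_num

lemma const_of_adj_eq (L : ℕ) [NeZero L] (v : ZMod L × ZMod L → ℝ)
    (hv : ∀ x y, 0 < torDist2 L x y → torDist2 L x y ≤ 2 → v x = v y) :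
    ∃ c, v = Function.const _ c := by
  refine ⟨v (0, 0), funext fun p => ?_⟩
  obtain ⟨p1, p2⟩ := p
  rcases le_or_gt L 1 with hL | hL
  · have hz : ∀ z : ZMod L, z = 0 := by
      intro z
      have h1 := ZMod.val_lt z
      have h2 : z.val = 0 := by omega
      exact (ZMod.val_eq_zero _).mp h2
    rw [hz p1, hz p2]; rfl
  · have step1 : ∀ i j : ZMod L, v (i, j) = v (i + 1, j) := fun i j =>
      hv _ _ (by rw [torDist2_step1 L hL]; omega) (by rw [torDist2_step1 L hL]; omega)
    have step2 : ∀ i j : ZMod L, v (i, j) = v (i, j + 1) := fun i j =>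
      hv _ _ (by rw [torDist2_step2 L hL]; omega) (by rw [torDist2_step2 L hL]; omega)
    have hrow : ∀ (n : ℕ) (j : ZMod L), v ((n : ZMod L), j) = v (0, j) := by
      intro n
      induction n with
      | zero => intro j; norm_num
      | succ n ih =>
          intro j
          rw [show ((n + 1 : ℕ) : ZMod L) = (n : ZMod L) + 1 by push_cast; ring, ← step1]
          exact ih j
    have hcol : ∀ (m : ℕ), v (0, (m : ZMod L)) = v (0, 0) := by
      intro m
      induction m with
      | zero => norm_num
      | succ m ih =>
          rw [show ((m + 1 : ℕ) : ZMod L) = (m : ZMod L) + 1 by push_cast; ring, ← step2]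
          exact ih
    have e1 : v (p1, p2) = v (((p1.val : ℕ) : ZMod L), p2) := by
      rw [ZMod.natCast_rightInverse p1]
    have e2 : v (0, p2) = v (0, ((p2.val : ℕ) : ZMod L)) := by
      rw [ZMod.natCast_rightInverse p2]
    show v (p1, p2) = v (0, 0)
    rw [e1, hrow, e2, hcol]

/-- Coupling range `r = √2` (nearest plus diagonal neighbors): if `4(|q1|+|q2|) < L` then the
Jacobian at the `(q1,q2)`-twisted state is negative semidefinite, its kernel is one-dimensional,
spanned by the all-ones vector, and all eigenvalues other than the simple eigenvalue `0` are
strictly negative (the twisted state is asymptotically stable). -/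
theorem diagonal_coupling_stable (L : ℕ) [NeZero L] (q1 q2 : ℤ) (C : ℝ)
    (h : 4 * (|q1| + |q2|) < (L : ℤ)) :
    (∀ x : ZMod L × ZMod L → ℝ, x ⬝ᵥ (jac2 L 2 (twisted2 L q1 q2 C)).mulVec x ≤ 0) ∧
    (jac2 L 2 (twisted2 L q1 q2 C)).mulVec (Function.const _ 1) = 0 ∧
    (∀ y : ZMod L × ZMod L → ℝ,
      (jac2 L 2 (twisted2 L q1 q2 C)).mulVec y = 0 → ∃ c : ℝ, y = Function.const _ c) ∧
    (∀ μ : ℝ, Module.End.HasEigenvalue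
      (Matrix.toLin' (jac2 L 2 (twisted2 L q1 q2 C))) μ → μ ≠ 0 → μ < 0) := by
  set u := twisted2 L q1 q2 C with hu
  have hwpos : ∀ x y, 0 < torDist2 L x y → torDist2 L x y ≤ 2 → 0 < wgt L 2 u x y := by
    intro x y h1 h2
    unfold wgt adjN2
    rw [if_pos ⟨h1, h2⟩, one_mul]
    exact cos_pos_adj L q1 q2 C h x y h1 h2
  have hwnn : ∀ x y, 0 ≤ wgt L 2 u x y := by
    intro x y
    by_cases hc : 0 < torDist2 L x y ∧ torDist2 L x y ≤ 2
    · exact le_of_lt (hwpos x y hc.1 hc.2)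
    · unfold wgt adjN2; rw [if_neg hc, zero_mul]
  have hquad : ∀ v : ZMod L × ZMod L → ℝ, v ⬝ᵥ (jac2 L 2 u).mulVec v ≤ 0 := by
    intro v
    rw [quad]
    have : 0 ≤ ∑ x, ∑ y, wgt L 2 u x y * (v x - v y)^2 :=
      Finset.sum_nonneg fun x _ => Finset.sum_nonneg fun y _ =>
        mul_nonneg (hwnn x y) (sq_nonneg _)
    linarith
  refine ⟨hquad, ?_, ?_, ?_⟩
  · funext x
    show ∑ y, jac2 L 2 u x y * (Function.const (ZMod L × ZMod L) (1:ℝ)) y = 0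
    rw [rowsum]
    simp [Function.const]
  · intro v hvker
    have hq0 : v ⬝ᵥ (jac2 L 2 u).mulVec v = 0 := by
      rw [hvker, dotProduct_zero]
    rw [quad] at hq0
    have hsum : ∑ x, ∑ y, wgt L 2 u x y * (v x - v y)^2 = 0 := by linarith
    have hterm : ∀ x y, wgt L 2 u x y * (v x - v y)^2 = 0 := by
      intro x y
      have h1 := (Finset.sum_eq_zero_iff_of_nonneg (fun x _ =>
        Finset.sum_nonneg fun y _ => mul_nonneg (hwnn x y) (sq_nonneg _))).mp hsum x
        (Finset.mem_univ x)
      exact (Finset.sum_eq_zero_iff_of_nonneg (fun y _ =>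
        mul_nonneg (hwnn x y) (sq_nonneg _))).mp h1 y (Finset.mem_univ y)
    apply const_of_adj_eq
    intro x y h1 h2
    have hw := hwpos x y h1 h2
    have ht := hterm x y
    have h4 : (v x - v y)^2 = 0 := by
      rcases mul_eq_zero.mp ht with h' | h'
      · linarith
      · exact h'
    have h5 := pow_eq_zero_iff (n := 2) (by norm_num) |>.mp h4
    linarith [sub_eq_zero.mp h5]
  · intro μ hμ hne
    obtain ⟨v, hv⟩ := hμ.exists_hasEigenvector
    have hvne := hv.2
    have happ : (jac2 L 2 u).mulVec v = μ • v := by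
      have h6 := hv.apply_eq_smul
      rwa [Matrix.toLin'_apply] at h6
    have hd : v ⬝ᵥ (jac2 L 2 u).mulVec v = μ * (v ⬝ᵥ v) := by
      rw [happ]
      simp [dotProduct_smul, smul_eq_mul]
    have hpos : 0 < v ⬝ᵥ v := by
      have hnn : 0 ≤ v ⬝ᵥ v := Finset.sum_nonneg fun i _ => mul_self_nonneg _
      rcases hnn.lt_or_eq with hlt | heq
      · exact hlt
      · exact absurd ((dotProduct_self_eq_zero).mp heq.symm) hvne
    have h7 := hquad v
    rw [hd] at h7
    rcases lt_trichotomy μ 0 with h' | h' | h'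
    · exact h'
    · exact absurd h' hne
    · nlinarith
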